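/- Let g(x) = -(η/h(0)) · h(2x/w) where h is the standard bump function on ℝ^d. Then for λ > 0, ∫_{[-w/2,w/2]^d} (e^{-λ g(x)} - 1) dx ≥ (w/2)^d (e^{c λ η} - 1), where c = h((1/2,...,1/2))/h(0). -/

import Mathlib

/-! The integrand is nonnegative on the whole cube, so it suffices to bound it below on the
inner cube `[-w/4, w/4]^d`, of volume `(w/2)^d`. There every coordinate of `2x/w` has absolute
value at most `1/2`, so `‖2x/w‖ ≤ ‖(1/2, …, 1/2)‖`; as `h` decreases with the norm,
`-λ g(x) = λη h(2x/w)/h(0) ≥ cλη`. -/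

open Real MeasureTheory

section RadialBump

variable {E : Type*} [SeminormedAddCommGroup E]

noncomputable def radialBump (x : E) : ℝ :=
  expNegInvGlue (1 - ‖x‖ ^ 2)

lemma radialBump_eq_ite (x : E) :
    radialBump x = if ‖x‖ < 1 then exp (-1 / (1 - ‖x‖ ^ 2)) else 0 := by
  rw [radialBump, expNegInvGlue]
  rcases lt_or_ge ‖x‖ 1 with hx | hx
  · rw [if_pos hx, if_neg (by nlinarith [norm_nonneg x]), neg_div, one_div]
  · rw [if_neg hx.not_gt, if_pos (by nlinarith)]

lemma radialBump_nonneg (x : E) : 0 ≤ radialBump x :=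
  expNegInvGlue.nonneg _

lemma radialBump_zero_pos : 0 < radialBump (0 : E) :=
  expNegInvGlue.pos_of_pos (by simp)

@[fun_prop]
lemma continuous_radialBump : Continuous (radialBump : E → ℝ) :=
  (expNegInvGlue.contDiff (n := 0)).continuous.comp (by fun_prop)

lemma radialBump_le_of_norm_le {x y : E} (hxy : ‖x‖ ≤ ‖y‖) : radialBump y ≤ radialBump x :=
  expNegInvGlue.monotone (by gcongr)

end RadialBump

lemma EuclideanSpace.norm_le_norm_of_forall_norm_le {𝕜 ι : Type*} [RCLike 𝕜] [Fintype ι]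
    {x y : EuclideanSpace 𝕜 ι} (hxy : ∀ i, ‖x i‖ ≤ ‖y i‖) : ‖x‖ ≤ ‖y‖ := by
  rw [EuclideanSpace.norm_eq, EuclideanSpace.norm_eq]
  gcongr with i
  exact hxy i

lemma volume_real_univ_pi_Icc_neg {ι : Type*} [Fintype ι] {a : ℝ} (ha : 0 ≤ a) :
    volume.real (Set.univ.pi fun _ : ι => Set.Icc (-a) a) = (2 * a) ^ Fintype.card ι := by
  rw [measureReal_def, volume_pi_pi]
  simp [ENNReal.toReal_ofReal (by linarith : 0 ≤ a + a), two_mul]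

lemma setIntegral_ge_of_const_le_of_subset {X : Type*} [MeasurableSpace X] {μ : Measure X}
    {f : X → ℝ} {s t : Set X} {c : ℝ} (hst : s ⊆ t) (hs : MeasurableSet s) (hμs : μ s ≠ ⊤)
    (hcf : ∀ x ∈ s, c ≤ f x) (hf : IntegrableOn f t μ) (hf_nonneg : 0 ≤ᵐ[μ.restrict t] f) :
    c * μ.real s ≤ ∫ x in t, f x ∂μ :=
  (setIntegral_ge_of_const_le_real hs hμs hcf (hf.mono_set hst)).trans
    (setIntegral_mono_set hf hf_nonneg (Filter.Eventually.of_forall hst))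

lemma radialBump_const_le_of_abs_le {ι : Type*} [Fintype ι] {a : ℝ} {y : EuclideanSpace ℝ ι}
    (hy : ∀ i, |y i| ≤ a) : radialBump (WithLp.toLp 2 fun _ : ι => a) ≤ radialBump y :=
  radialBump_le_of_norm_le <| EuclideanSpace.norm_le_norm_of_forall_norm_le fun i => by
    simpa [Real.norm_eq_abs, abs_of_nonneg ((abs_nonneg _).trans (hy i))] using hy i

lemma radialBump_half_le_of_mem_cube {ι : Type*} [Fintype ι] {w : ℝ} (hw : 0 < w) {x : ι → ℝ}
    (hx : x ∈ Set.univ.pi fun _ => Set.Icc (-(w / 4)) (w / 4)) :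
    radialBump (WithLp.toLp 2 fun _ : ι => (1 : ℝ) / 2) ≤
      radialBump ((2 / w) • WithLp.toLp 2 x) := by
  refine radialBump_const_le_of_abs_le fun i => ?_
  rw [PiLp.smul_apply, smul_eq_mul, abs_mul, abs_of_pos (by positivity : 0 < 2 / w)]
  calc 2 / w * |x i| ≤ 2 / w * (w / 4) := by gcongr; exact abs_le.2 (hx i trivial)
    _ = 1 / 2 := by field_simp; norm_num

/-- For `g(x) = -(η/h(0)) · h(2x/w)` with `h` the standard bump function and `λ > 0`,
`∫_{[-w/2,w/2]^d} (e^{-λ g} - 1) ≥ (w/2)^d (e^{cλη} - 1)` with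
`c = h((1/2,…,1/2)) / h(0)`. -/
theorem stmt_4 (d : ℕ) (η w lam : ℝ) (hη : 0 < η) (hw : 0 < w) (hlam : 0 < lam)
    (h g : EuclideanSpace ℝ (Fin d) → ℝ)
    (hh : ∀ x, h x = if ‖x‖ < 1 then Real.exp (-1 / (1 - ‖x‖ ^ 2)) else 0)
    (hg : ∀ x, g x = -(η / h 0) * h ((2 / w) • x)) :
    (w / 2) ^ d * (Real.exp ((h (WithLp.toLp 2 (fun _ => (1 : ℝ) / 2)) / h 0) * lam * η) - 1) ≤
      ∫ x in (Set.univ.pi fun _ : Fin d => Set.Icc (-(w / 2)) (w / 2)),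
        (Real.exp (-(lam * g (WithLp.toLp 2 x))) - 1) := by
  obtain rfl : h = radialBump := funext fun x => (hh x).trans (radialBump_eq_ite x).symm
  set p : EuclideanSpace ℝ (Fin d) := WithLp.toLp 2 fun _ => 1 / 2
  set b := radialBump (0 : EuclideanSpace ℝ (Fin d))
  have hb : 0 < b := radialBump_zero_pos
  have hexp (y) : -(lam * g y) = radialBump ((2 / w) • y) / b * lam * η := by
    rw [hg]; ring
  set F : (Fin d → ℝ) → ℝ := fun x => exp (-(lam * g (WithLp.toLp 2 x))) - 1
  set S := Set.univ.pi fun _ : Fin d => Set.Icc (-(w / 4)) (w / 4)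
  have hF_nonneg (x) : 0 ≤ F x := by
    have := radialBump_nonneg ((2 / w) • WithLp.toLp 2 x)
    have : 0 ≤ -(lam * g (WithLp.toLp 2 x)) := by rw [hexp]; positivity
    simpa [F] using one_le_exp this
  have hF_ge : ∀ x ∈ S, exp (radialBump p / b * lam * η) - 1 ≤ F x := by
    intro x hx
    have harg : radialBump p / b * lam * η ≤ -(lam * g (WithLp.toLp 2 x)) := by
      rw [hexp]
      gcongr
      exact radialBump_half_le_of_mem_cube hw hx
    simpa [F] using exp_le_exp.2 harg
  have hF_cont : Continuous F := by
    have : Continuous g := by rw [funext hg]; fun_prop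
    fun_prop
  have hS_sub : S ⊆ Set.univ.pi fun _ : Fin d => Set.Icc (-(w / 2)) (w / 2) :=
    Set.pi_mono fun _ _ => Set.Icc_subset_Icc (by linarith) (by linarith)
  calc _ = (exp (radialBump p / b * lam * η) - 1) * volume.real S := by
        rw [volume_real_univ_pi_Icc_neg (by positivity), Fintype.card_fin]; ring
    _ ≤ _ := setIntegral_ge_of_const_le_of_subset hS_sub
        (MeasurableSet.univ_pi fun _ => measurableSet_Icc)
        (isCompact_univ_pi fun _ => isCompact_Icc).measure_ne_top hF_ge
        (hF_cont.continuousOn.integrableOn_compact (isCompact_univ_pi fun _ => isCompact_Icc))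
        (ae_of_all _ hF_nonneg)
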